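/- arXiv:1103.2784 — 2 statements merged into one kernel-verified Lean document; each statement's English description precedes it below -/
import Mathlib

section
/- Let G act freely by isometries on a Λ-tree T with base point x, and suppose the based length function l(g) = d(x, gx) is regular. Then every nontrivial g ∈ G is conjugate in G to an element f whose axis A_f contains the base point x; equivalently, there exists u ∈ G with l(ugu⁻¹) = l_T(g). -/
variable {Λ X G : Type*}

/-- `d` is a `Λ`-metric on `X` (`Λ` an ordered abelian group). -/
structure IsLambdaMetric [AddCommGroup Λ] [LinearOrder Λ] [IsOrderedAddMonoid Λ] (d : X → X → Λ) : Prop where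
  nonneg : ∀ x y, 0 ≤ d x y
  eq_zero_iff : ∀ x y, d x y = 0 ↔ x = y
  symm : ∀ x y, d x y = d y x
  triangle : ∀ x y z, d x z ≤ d x y + d y z

/-- `S` is a segment with endpoints `x`, `y` in the `Λ`-metric space `(X, d)`:
the image of an isometry `α` from a closed interval `[a,b] ⊆ Λ`. -/
def IsSegment [AddCommGroup Λ] [LinearOrder Λ] [IsOrderedAddMonoid Λ] (d : X → X → Λ) (S : Set X) (x y : X) : Prop :=
  ∃ (a b : Λ) (α : Λ → X), a ≤ b ∧ α a = x ∧ α b = y ∧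
    (∀ s ∈ Set.Icc a b, ∀ t ∈ Set.Icc a b, d (α s) (α t) = |s - t|) ∧
    S = α '' Set.Icc a b

/-- `(X, d)` is a `Λ`-tree: a geodesic `Λ`-metric space in which (T2) the union
of two segments meeting in a single common endpoint is a segment, and (T3) the
intersection of two segments with a common endpoint is a segment. -/
structure IsLambdaTree [AddCommGroup Λ] [LinearOrder Λ] [IsOrderedAddMonoid Λ] (d : X → X → Λ) : Prop where
  metric : IsLambdaMetric d
  geodesic : ∀ x y : X, ∃ S : Set X, IsSegment d S x y
  union_seg : ∀ (S₁ S₂ : Set X) (x y p : X), IsSegment d S₁ p x → IsSegment d S₂ p y →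
      S₁ ∩ S₂ = {p} → IsSegment d (S₁ ∪ S₂) x y
  inter_seg : ∀ (S₁ S₂ : Set X) (x y z : X), IsSegment d S₁ x y → IsSegment d S₂ x z →
      ∃ w : X, IsSegment d (S₁ ∩ S₂) x w

/-!
Regularity applied to `g` and `g⁻¹` yields `u` such that `p = u • x` is the centre of the tripod
spanned by `x`, `g • x` and `g⁻¹ • x`, and the midpoint of `[g⁻¹ • x, g • x]`. Using the
four-point condition of the `Λ`-tree and the absence of fixed points of `g²`, `p` lies between
`g⁻¹ • p` and `g • p`, and such a point has minimal displacement, again by the four-point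
condition. Conjugating by `u⁻¹` moves `p` to the base point.
-/

namespace IsSegment

variable [AddCommGroup Λ] [LinearOrder Λ] [IsOrderedAddMonoid Λ] {d : X → X → Λ} {S : Set X}
  {x y : X}

lemma left_mem (h : IsSegment d S x y) : x ∈ S := by
  obtain ⟨a, b, α, hab, rfl, -, -, rfl⟩ := h
  exact ⟨a, ⟨le_rfl, hab⟩, rfl⟩

lemma right_mem (h : IsSegment d S x y) : y ∈ S := by
  obtain ⟨a, b, α, hab, -, rfl, -, rfl⟩ := h
  exact ⟨b, ⟨hab, le_rfl⟩, rfl⟩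

lemma dist_eq_abs_sub (h : IsSegment d S x y) {p q : X} (hp : p ∈ S) (hq : q ∈ S) :
    d p q = |d x p - d x q| := by
  obtain ⟨a, b, α, hab, rfl, -, hα, rfl⟩ := h
  obtain ⟨s, hs, rfl⟩ := hp
  obtain ⟨t, ht, rfl⟩ := hq
  have ha : a ∈ Set.Icc a b := ⟨le_rfl, hab⟩
  rw [hα s hs t ht, hα a ha s hs, hα a ha t ht]
  grind

lemma exists_tail (h : IsSegment d S x y) {w : X} (hw : w ∈ S) :
    ∃ T ⊆ S, IsSegment d T w y ∧ ∀ q ∈ T, d x q = d x w + d w q := by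
  obtain ⟨a, b, α, hab, rfl, rfl, hα, rfl⟩ := h
  obtain ⟨s, hs, rfl⟩ := hw
  have hsub : Set.Icc s b ⊆ Set.Icc a b := Set.Icc_subset_Icc hs.1 le_rfl
  refine ⟨α '' Set.Icc s b, Set.image_mono hsub,
    ⟨s, b, α, hs.2, rfl, rfl, fun u hu v hv => hα u (hsub hu) v (hsub hv), rfl⟩, ?_⟩
  rintro _ ⟨t, ht, rfl⟩
  have ha : a ∈ Set.Icc a b := ⟨le_rfl, hab⟩
  rw [hα a ha t (hsub ht), hα a ha s hs, hα s hs t (hsub ht)]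
  grind

lemma dist_add_dist (h : IsSegment d S x y) {p : X} (hp : p ∈ S) : d x p + d p y = d x y := by
  obtain ⟨T, -, hT, hadd⟩ := h.exists_tail hp
  exact (hadd y hT.right_mem).symm

end IsSegment

namespace IsLambdaTree

variable [AddCommGroup Λ] [LinearOrder Λ] [IsOrderedAddMonoid Λ] {d : X → X → Λ}

/-- Axiom (T3) gives `[y, m] = [y, z] ∩ [y, t]`; the tails `[m, z]` and `[m, t]` then meet only
in `m`, so by (T2) their union is the segment `[z, t]`. -/
lemma exists_proj (htree : IsLambdaTree d) {S : Set X} {y z : X} (hS : IsSegment d S y z)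
    (t : X) : ∃ m ∈ S, d y m + d m t = d y t ∧ d z m + d m t = d z t := by
  obtain ⟨S', hS'⟩ := htree.geodesic y t
  obtain ⟨m, hm⟩ := htree.inter_seg S S' y z t hS hS'
  obtain ⟨hmS, hmS'⟩ : m ∈ S ∩ S' := hm.right_mem
  obtain ⟨T, hTS, hT, hTadd⟩ := hS.exists_tail hmS
  obtain ⟨T', hTS', hT', -⟩ := hS'.exists_tail hmS'
  have hTT' : T ∩ T' = {m} := by
    refine Set.eq_singleton_iff_unique_mem.2 ⟨⟨hT.left_mem, hT'.left_mem⟩, ?_⟩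
    rintro q ⟨hqT, hqT'⟩
    have h₁ := hm.dist_add_dist ⟨hTS hqT, hTS' hqT'⟩
    have h₂ := hTadd q hqT
    have hmq := htree.metric.nonneg m q
    have hdist : d m q = 0 := by rw [htree.metric.symm q m] at h₁; grind
    exact ((htree.metric.eq_zero_iff m q).1 hdist).symm
  refine ⟨m, hmS, hS'.dist_add_dist hmS', ?_⟩
  exact (htree.union_seg T T' z t m hT hT' hTT').dist_add_dist (Or.inl hT.left_mem)

lemma four_point (htree : IsLambdaTree d) (w x y z : X) :
    d w x + d y z ≤ max (d w y + d x z) (d w z + d x y) := by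
  have hsymm := htree.metric.symm
  obtain ⟨S, hS⟩ := htree.geodesic y z
  obtain ⟨m, hmS, hm₁, hm₂⟩ := htree.exists_proj hS w
  obtain ⟨m', hm'S, hm'₁, hm'₂⟩ := htree.exists_proj hS x
  have hyz := hS.dist_add_dist hmS
  have hyz' := hS.dist_add_dist hm'S
  have hmm' := hS.dist_eq_abs_sub hmS hm'S
  have htri : d w x ≤ d w m + d m m' + d m' x :=
    (htree.metric.triangle w m x).trans (by grind [htree.metric.triangle m m' x])
  rw [hsymm w y, hsymm x z, hsymm w z, hsymm x y, hsymm w m] at *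
  grind

end IsLambdaTree

section IsometricAction

variable {d : X → X → Λ} [Group G] [MulAction G X]

lemma dist_inv_smul_left (hiso : ∀ (g : G) (x y : X), d (g • x) (g • y) = d x y)
    (g : G) (p q : X) : d (g⁻¹ • p) q = d p (g • q) := by
  rw [← hiso g, smul_inv_smul]

lemma dist_smul_left (hiso : ∀ (g : G) (x y : X), d (g • x) (g • y) = d x y)
    (g : G) (p q : X) : d (g • p) q = d p (g⁻¹ • q) := by
  simpa using dist_inv_smul_left hiso g⁻¹ p q

lemma dist_conj_smul (hiso : ∀ (g : G) (x y : X), d (g • x) (g • y) = d x y)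
    (u g : G) (t : X) : d t ((u * g * u⁻¹) • t) = d (u⁻¹ • t) (g • u⁻¹ • t) := by
  rw [← hiso u⁻¹, ← mul_smul, ← mul_smul]
  congr 2
  group

lemma minDisplacement_conj [PartialOrder Λ] (hiso : ∀ (g : G) (x y : X), d (g • x) (g • y) = d x y)
    {lT : G → Λ} (hlT : ∀ g : G, (∃ t : X, d t (g • t) = lT g) ∧ ∀ t : X, lT g ≤ d t (g • t))
    (u g : G) : lT (u * g * u⁻¹) = lT g := by
  obtain ⟨t, ht⟩ := (hlT g).1
  obtain ⟨s, hs⟩ := (hlT (u * g * u⁻¹)).1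
  apply le_antisymm
  · calc lT (u * g * u⁻¹) ≤ d (u • t) ((u * g * u⁻¹) • u • t) := (hlT _).2 _
      _ = lT g := by rw [dist_conj_smul hiso, inv_smul_smul, ht]
  · calc lT g ≤ d (u⁻¹ • s) (g • u⁻¹ • s) := (hlT g).2 _
      _ = lT (u * g * u⁻¹) := by rw [← dist_conj_smul hiso, hs]

variable [AddCommGroup Λ] [LinearOrder Λ] [IsOrderedAddMonoid Λ]

lemma dist_smul_le_of_between (htree : IsLambdaTree d)
    (hiso : ∀ (g : G) (x y : X), d (g • x) (g • y) = d x y) {g : G} {p : X}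
    (hbetw : d (g⁻¹ • p) (g • p) = d (g⁻¹ • p) p + d p (g • p)) (t : X) :
    d p (g • p) ≤ d t (g • t) := by
  have h4 := htree.four_point (g⁻¹ • p) (g • p) p t
  have h₁ := htree.metric.triangle (g • p) (g • t) t
  have h₂ := htree.metric.triangle (g⁻¹ • p) (g⁻¹ • t) t
  rw [hbetw, dist_inv_smul_left hiso, htree.metric.symm (g • p) p] at h4
  rw [hiso, htree.metric.symm (g • t) t] at h₁
  rw [hiso, dist_inv_smul_left hiso g t t] at h₂
  grind

/-- The four-point condition gives `d x p ≤ m`, as otherwise `g⁻¹ • p = g • p`; then `p` lies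
between `g⁻¹ • p` and `g • p`. -/
lemma dist_smul_le_of_tripod (htree : IsLambdaTree d)
    (hiso : ∀ (g : G) (x y : X), d (g • x) (g • y) = d x y) {g : G}
    (hg : ∀ t : X, (g * g) • t ≠ t) {x p : X} {m : Λ} (hpg : d p (g • x) = m)
    (hpg' : d p (g⁻¹ • x) = m) (hxp : d x p + m = d x (g • x))
    (hgg : d (g⁻¹ • x) (g • x) = m + m) (t : X) : d p (g • p) ≤ d t (g • t) := by
  have hsymm := htree.metric.symm
  have hgpx : d (g • p) x = m := by rw [dist_smul_left hiso, hpg']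
  have hgpgx : d (g • p) (g • x) = d x p := by rw [hiso, hsymm]
  have hgp : d (g⁻¹ • p) p = d p (g • p) := dist_inv_smul_left hiso g p p
  have hgpx' : d (g⁻¹ • p) x = m := by rw [dist_inv_smul_left hiso, hpg]
  have h₁ := htree.four_point p (g • p) x (g • x)
  rw [hsymm p x, hgpgx, hpg, hgpx] at h₁
  rcases le_total (d x p) m with hle | hle
  · refine dist_smul_le_of_between htree hiso (le_antisymm (htree.metric.triangle _ _ _) ?_) t
    have h₂ := htree.metric.triangle (g⁻¹ • x) (g⁻¹ • p) (g • x)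
    have h₃ := htree.metric.triangle (g⁻¹ • p) (g • p) (g • x)
    rw [hiso] at h₂
    rw [hgpgx] at h₃
    grind
  · have h₂ := htree.metric.triangle x (g • p) p
    have h₃ := htree.four_point (g⁻¹ • p) (g • p) x p
    rw [hsymm x (g • p), hgpx, hsymm (g • p) p, hgpx', hgp, hgpx] at *
    have hzero : d (g⁻¹ • p) (g • p) = 0 := by
      have := htree.metric.nonneg (g⁻¹ • p) (g • p)
      grind
    refine absurd ?_ (hg p)
    rw [mul_smul, ← (htree.metric.eq_zero_iff _ _).1 hzero, smul_inv_smul]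

/-- The witness is the common prefix `u` of `g` and `g⁻¹` given by regularity. -/
lemma exists_tripod_center (hmetric : IsLambdaMetric d)
    (hiso : ∀ (g : G) (x y : X), d (g • x) (g • y) = d x y) {x : X}
    (hreg : ∀ g f : G, ∃ u g₁ f₁ : G,
      g = u * g₁ ∧ d x (g • x) = d x (u • x) + d x (g₁ • x) ∧
      f = u * f₁ ∧ d x (f • x) = d x (u • x) + d x (f₁ • x) ∧
      2 • d x (u • x) = d x (g • x) + d x (f • x) - d x ((g⁻¹ * f) • x)) (g : G) :
    ∃ (u : G) (m : Λ), d (u • x) (g • x) = m ∧ d (u • x) (g⁻¹ • x) = m ∧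
      d x (u • x) + m = d x (g • x) ∧ d (g⁻¹ • x) (g • x) = m + m := by
  obtain ⟨u, g₁, f₁, rfl, hg, hf, hf', hc⟩ := hreg g g⁻¹
  have hlen (h : G) : d x (h⁻¹ • x) = d x (h • x) := by
    rw [hmetric.symm, dist_inv_smul_left hiso]
  have hshift (h : G) : d (u • x) ((u * h) • x) = d x (h • x) := by rw [mul_smul, hiso]
  have hf₁ : g₁⁻¹ * u⁻¹ = u * f₁ := by rw [← hf, mul_inv_rev]
  have hsq : d ((u * g₁)⁻¹ • x) ((u * g₁) • x) = d x (((u * g₁)⁻¹ * (u * g₁)⁻¹) • x) := by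
    rw [← hiso (u * g₁)⁻¹, inv_smul_smul, ← mul_smul, hmetric.symm]
  rw [hlen, hg] at hf'
  rw [hlen, hg, ← hsq] at hc
  refine ⟨u, d x (g₁ • x), hshift g₁, ?_, hg.symm, by grind⟩
  rw [mul_inv_rev, hf₁, hshift]
  grind

end IsometricAction

/-- let `G` act freely by isometries on a `Λ`-tree `(X,d)` with base
point `x`, with the based length function `l g = d x (g • x)` regular, and with
the translation length `lT` attained.  Then every nontrivial `g` is conjugate
to an element `u g u⁻¹` whose axis contains `x` (i.e. `l (u g u⁻¹) = lT (u g u⁻¹)`);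
equivalently `l (u g u⁻¹) = lT g`. -/
theorem conjugate_axis_through_basepoint {G : Type*} [Group G] [MulAction G X]
    [AddCommGroup Λ] [LinearOrder Λ] [IsOrderedAddMonoid Λ] (d : X → X → Λ)
    (htree : IsLambdaTree d)
    (hiso : ∀ (g : G) (x y : X), d (g • x) (g • y) = d x y)
    (hfree : ∀ g : G, g ≠ 1 → (∀ t : X, g • t ≠ t) ∧ ∀ t : X, (g * g) • t ≠ t)
    (x : X)
    (lT : G → Λ)
    (hlT : ∀ g : G, (∃ t : X, d t (g • t) = lT g) ∧ ∀ t : X, lT g ≤ d t (g • t))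
    (hreg : ∀ g f : G, ∃ u g₁ f₁ : G,
      g = u * g₁ ∧ d x (g • x) = d x (u • x) + d x (g₁ • x) ∧
      f = u * f₁ ∧ d x (f • x) = d x (u • x) + d x (f₁ • x) ∧
      2 • d x (u • x) = d x (g • x) + d x (f • x) - d x ((g⁻¹ * f) • x)) :
    ∀ g : G, g ≠ 1 → ∃ u : G,
      d x ((u * g * u⁻¹) • x) = lT (u * g * u⁻¹) ∧ lT (u * g * u⁻¹) = lT g := by
  intro g hg
  obtain ⟨u, m, hpg, hpg', hxp, hgg⟩ := exists_tripod_center htree.metric hiso hreg g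
  have hmin : d (u • x) (g • u • x) = lT g := by
    obtain ⟨t, ht⟩ := (hlT g).1
    refine le_antisymm ?_ ((hlT g).2 _)
    exact ht ▸ dist_smul_le_of_tripod htree hiso (hfree g hg).2 hpg hpg' hxp hgg t
  have hconj := minDisplacement_conj hiso hlT u⁻¹ g
  refine ⟨u⁻¹, ?_, hconj⟩
  rw [hconj, dist_conj_smul hiso, inv_inv, hmin]
end

section
/- Let G be a group acting freely on a ℤⁿ-tree with a regular based length function, and let à be an abelian subgroup of G. Then à is conjugate in G to an abelian subgroup A such that every element of A is cyclically reduced (i.e., the axis of every nontrivial element of A passes through the base point). -/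
variable {Λ X G : Type*}

/-- `ℤⁿ` with the lexicographic order, as a linearly ordered abelian group. -/
noncomputable instance ZnLex.instLinearOrderedAddCommGroup (n : ℕ) :
    LinearOrder (Lex (Fin n → ℤ)) :=
  @Pi.Lex.linearOrder (Fin n) (fun _ => ℤ) _ Finite.to_wellFoundedLT _

/-!
Pick a nontrivial `a₀ ∈ A₀`. Regularity of the based length function, applied to `a₀` and `a₀⁻¹`,
yields `u ∈ G` such that `u • x` is the median of `x`, `a₀ • x` and `a₀⁻¹ • x`. In a `Λ`-tree the
median of `x`, `g • x`, `g⁻¹ • x` lies on the axis of `g` as soon as `g` fixes no point and inverts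
no segment. An element `b` commuting with `a₀` maps the axis of `a₀` to itself and moves `y`,
`b • y`, `b • b • y` along that line in one direction, so `d y (b • b • y) = 2 d y (b • y)`; this
forces `y` to be a point of minimal displacement of `b`. Conjugating by `u⁻¹` moves all these axes
to `x`.
-/

namespace LambdaTree

variable [AddCommGroup Λ] [LinearOrder Λ] [IsOrderedAddMonoid Λ]

def Between (d : X → X → Λ) (p q r : X) : Prop := d p q + d q r = d p r

/-- Twice the Gromov product `(u · v)_p`; the factor 2 keeps it in `Λ`. -/
def gromov (d : X → X → Λ) (p u v : X) : Λ := d p u + d p v - d u v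

def IsMedian (d : X → X → Λ) (u v w m : X) : Prop :=
  Between d u m v ∧ Between d u m w ∧ Between d v m w

/-- The points of minimal displacement of `g`: its axis `A_g` when `g` is hyperbolic. -/
def axis [SMul G X] (d : X → X → Λ) (g : G) : Set X :=
  {q | ∀ t, d q (g • q) ≤ d t (g • t)}

end LambdaTree

open LambdaTree

section

variable [AddCommGroup Λ] [LinearOrder Λ] [IsOrderedAddMonoid Λ] {d : X → X → Λ}

theorem eq_zero_or_eq_zero_of_add_le_abs_sub {a b : Λ} (ha : 0 ≤ a) (hb : 0 ≤ b)
    (h : a + b ≤ |a - b|) : a = 0 ∨ b = 0 := by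
  rcases abs_cases (a - b) with ⟨e, -⟩ | ⟨e, -⟩ <;> rw [e] at h
  · right; grind
  · left; grind

namespace IsLambdaMetric

variable (hd : IsLambdaMetric d)
include hd

theorem between_symm {p q r : X} (h : Between d p q r) : Between d r q p := by
  unfold Between at h ⊢
  rw [hd.symm r q, hd.symm q p, hd.symm r p, add_comm]
  exact h

theorem between_self_right (p r : X) : Between d p r r := by
  rw [Between, (hd.eq_zero_iff r r).2 rfl, add_zero]

theorem gromov_comm (p u v : X) : gromov d p u v = gromov d p v u := by
  unfold gromov
  rw [hd.symm u v, add_comm (d p u)]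

theorem gromov_nonneg (p u v : X) : 0 ≤ gromov d p u v :=
  sub_nonneg.2 (hd.symm u p ▸ hd.triangle u p v)

theorem gromov_eq_zero_iff {p u v : X} : gromov d p u v = 0 ↔ Between d u p v := by
  rw [gromov, sub_eq_zero, Between, hd.symm u p]

theorem gromov_eq_of_isMedian {p u v m : X} (h : IsMedian d p u v m) :
    gromov d p u v = d p m + d p m := by
  obtain ⟨hu, hv, huv⟩ := h
  have := hd.symm u m
  unfold Between at hu hv huv
  unfold gromov
  grind

theorem eq_of_between_of_between {p u q : X} (h₁ : Between d p u q) (h₂ : Between d u p q) :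
    p = u := by
  have := hd.symm p u
  have := hd.nonneg p u
  unfold Between at h₁ h₂
  exact (hd.eq_zero_iff p u).1 (by grind)

theorem between_right_of_between {a b c e : X} (h₁ : Between d a b c) (h₂ : Between d a c e) :
    Between d b c e := by
  have := hd.triangle a b e
  have := hd.triangle b c e
  unfold Between at *
  grind

theorem between_shrink {x y m u v : X} (h : Between d x m y) (hu : Between d m u x)
    (hv : Between d m v y) : Between d u m v := by
  have := hd.triangle x u y
  have := hd.triangle u v y
  have := hd.triangle u m v
  have := hd.symm x m
  have := hd.symm x u
  have := hd.symm u m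
  unfold Between at *
  grind

theorem two_dist_le_gromov {p m m' u v : X} (hu : Between d p m u) (hv : Between d p m' v)
    (hm : Between d p m m') : d p m + d p m ≤ gromov d p u v := by
  have := hd.triangle u m v
  have := hd.triangle m m' v
  have := hd.symm u m
  unfold Between at *
  unfold gromov
  grind

end IsLambdaMetric

namespace IsSegment

variable {S : Set X} {p q : X}

theorem mem_left (hS : IsSegment d S p q) : p ∈ S := by
  obtain ⟨a, b, α, hab, rfl, rfl, -, rfl⟩ := hS
  exact ⟨a, ⟨le_rfl, hab⟩, rfl⟩

theorem mem_right (hS : IsSegment d S p q) : q ∈ S := by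
  obtain ⟨a, b, α, hab, rfl, rfl, -, rfl⟩ := hS
  exact ⟨b, ⟨hab, le_rfl⟩, rfl⟩

theorem between_of_dist_le (hS : IsSegment d S p q) {z₁ z₂ : X} (h₁ : z₁ ∈ S) (h₂ : z₂ ∈ S)
    (hle : d p z₁ ≤ d p z₂) : Between d p z₁ z₂ := by
  obtain ⟨a, b, α, hab, rfl, rfl, hα, rfl⟩ := hS
  obtain ⟨s₁, hs₁, rfl⟩ := h₁
  obtain ⟨s₂, hs₂, rfl⟩ := h₂
  have dist_eq : ∀ s ∈ Set.Icc a b, ∀ t ∈ Set.Icc a b, s ≤ t → d (α s) (α t) = t - s :=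
    fun s hs t ht hst => by rw [hα s hs t ht, abs_sub_comm, abs_of_nonneg (sub_nonneg.2 hst)]
  have ha : a ∈ Set.Icc a b := ⟨le_rfl, hab⟩
  rw [dist_eq a ha s₁ hs₁ hs₁.1, dist_eq a ha s₂ hs₂ hs₂.1] at hle
  have hs : s₁ ≤ s₂ := by simpa using hle
  rw [Between, dist_eq a ha s₁ hs₁ hs₁.1, dist_eq a ha s₂ hs₂ hs₂.1, dist_eq s₁ hs₁ s₂ hs₂ hs]
  abel

theorem between (hS : IsSegment d S p q) {z : X} (hz : z ∈ S) : Between d p z q := by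
  refine hS.between_of_dist_le hz hS.mem_right ?_
  obtain ⟨a, b, α, hab, rfl, rfl, hα, rfl⟩ := hS
  obtain ⟨s, hs, rfl⟩ := hz
  rw [hα a ⟨le_rfl, hab⟩ s hs, hα a ⟨le_rfl, hab⟩ b ⟨hab, le_rfl⟩, abs_sub_comm,
    abs_sub_comm a b, abs_of_nonneg (sub_nonneg.2 hs.1), abs_of_nonneg (sub_nonneg.2 hab)]
  exact sub_le_sub_right hs.2 a

theorem exists_subsegment (hS : IsSegment d S p q) {z : X} (hz : z ∈ S) :
    ∃ S' ⊆ S, IsSegment d S' z q := by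
  obtain ⟨a, b, α, -, rfl, rfl, hα, rfl⟩ := hS
  obtain ⟨s, hs, rfl⟩ := hz
  have hsub : Set.Icc s b ⊆ Set.Icc a b := Set.Icc_subset_Icc_left hs.1
  exact ⟨α '' Set.Icc s b, Set.image_mono hsub, s, b, α, hs.2, rfl, rfl,
    fun t ht t' ht' => hα t (hsub ht) t' (hsub ht'), rfl⟩

end IsSegment

end

namespace IsLambdaTree

variable [AddCommGroup Λ] [LinearOrder Λ] [IsOrderedAddMonoid Λ] {d : X → X → Λ}
  (ht : IsLambdaTree d)
include ht

theorem exists_median_mem {S : Set X} {p q : X} (hS : IsSegment d S p q) (r : X) :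
    ∃ m ∈ S, IsMedian d p q r m := by
  obtain ⟨S₂, hS₂⟩ := ht.geodesic p r
  obtain ⟨m, hm⟩ := ht.inter_seg S S₂ p q r hS hS₂
  have hmS : m ∈ S ∩ S₂ := hm.mem_right
  obtain ⟨T₁, hT₁S, hT₁⟩ := hS.exists_subsegment hmS.1
  obtain ⟨T₂, hT₂S, hT₂⟩ := hS₂.exists_subsegment hmS.2
  -- `T₁ = [m, q]` and `T₂ = [m, r]` meet only at `m`, because `S ∩ S₂ = [p, m]`.
  have hT : T₁ ∩ T₂ = {m} := by
    refine Set.Subset.antisymm (fun z hz => ?_)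
      (Set.singleton_subset_iff.2 ⟨hT₁.mem_left, hT₂.mem_left⟩)
    have hpzm : Between d p z m := hm.between ⟨hT₁S hz.1, hT₂S hz.2⟩
    exact ht.metric.eq_of_between_of_between
      (ht.metric.between_right_of_between hpzm (hS.between hmS.1)) (hT₁.between hz.1)
  exact ⟨m, hmS.1, hS.between hmS.1, hS₂.between hmS.2,
    (ht.union_seg T₁ T₂ q r m hT₁ hT₂ hT).between (Or.inl hT₁.mem_left)⟩

theorem exists_median (p q r : X) : ∃ m, IsMedian d p q r m := by
  obtain ⟨S, hS⟩ := ht.geodesic p q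
  obtain ⟨m, -, hm⟩ := ht.exists_median_mem hS r
  exact ⟨m, hm⟩

theorem isosceles (p u v z : X) :
    min (gromov d p u z) (gromov d p v z) ≤ gromov d p u v := by
  obtain ⟨S, hS⟩ := ht.geodesic p z
  obtain ⟨mu, hmuS, hmu⟩ := ht.exists_median_mem hS u
  obtain ⟨mv, hmvS, hmv⟩ := ht.exists_median_mem hS v
  rw [ht.metric.gromov_comm p u, ht.metric.gromov_comm p v,
    ht.metric.gromov_eq_of_isMedian hmu, ht.metric.gromov_eq_of_isMedian hmv]
  wlog hle : d p mu ≤ d p mv generalizing u v mu mv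
  · rw [min_comm, ht.metric.gromov_comm]
    exact this v u mv hmvS hmv mu hmuS hmu (le_of_not_ge hle)
  exact (min_le_left _ _).trans
    (ht.metric.two_dist_le_gromov hmu.2.1 hmv.2.1 (hS.between_of_dist_le hmuS hmvS hle))

theorem between_or_between {u m v : X} (h : Between d u m v) (p : X) :
    Between d p m u ∨ Between d p m v := by
  have hmin := ht.isosceles m u v p
  rw [ht.metric.gromov_eq_zero_iff.2 h] at hmin
  rcases min_le_iff.1 hmin with h' | h'
  · exact .inl (ht.metric.between_symm
      (ht.metric.gromov_eq_zero_iff.1 (le_antisymm h' (ht.metric.gromov_nonneg _ _ _))))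
  · exact .inr (ht.metric.between_symm
      (ht.metric.gromov_eq_zero_iff.1 (le_antisymm h' (ht.metric.gromov_nonneg _ _ _))))

theorem between_of_dist_le {p r z₁ z₂ : X} (h₁ : Between d p z₁ r) (h₂ : Between d p z₂ r)
    (hle : d p z₁ ≤ d p z₂) : Between d p z₁ z₂ := by
  have hmin := ht.isosceles p z₁ z₂ r
  have := ht.metric.triangle p z₁ z₂
  have := ht.metric.nonneg z₁ z₂
  unfold gromov at hmin
  unfold Between at *
  rcases min_le_iff.1 hmin with h | h <;> grind

theorem dist_eq_abs_sub {p r z₁ z₂ : X} (h₁ : Between d p z₁ r) (h₂ : Between d p z₂ r) :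
    d z₁ z₂ = |d p z₁ - d p z₂| := by
  wlog hle : d p z₁ ≤ d p z₂ generalizing z₁ z₂
  · rw [ht.metric.symm, abs_sub_comm]
    exact this h₂ h₁ (le_of_not_ge hle)
  have h := ht.between_of_dist_le h₁ h₂ hle
  unfold Between at h
  rw [abs_of_nonpos (sub_nonpos.2 hle)]
  grind

end IsLambdaTree

namespace LambdaTree

section Isometry

variable {d : X → X → Λ} [Group G] [MulAction G X]

theorem between_smul [AddCommGroup Λ]
    (hiso : ∀ (g : G) (x y : X), d (g • x) (g • y) = d x y) (g : G) {p q r : X}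
    (h : Between d p q r) : Between d (g • p) (g • q) (g • r) := by
  unfold Between at *
  rwa [hiso, hiso, hiso]

theorem smul_mem_axis_conj [LinearOrder Λ]
    (hiso : ∀ (g : G) (x y : X), d (g • x) (g • y) = d x y) (w : G) {g : G} {q : X}
    (hq : q ∈ axis d g) : w • q ∈ axis d (w * g * w⁻¹) := by
  have key : ∀ t : X, d t ((w * g * w⁻¹) • t) = d (w⁻¹ • t) (g • w⁻¹ • t) := fun t => by
    rw [← hiso w⁻¹, mul_smul, mul_smul, inv_smul_smul]
  intro t
  rw [key, key, inv_smul_smul]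
  exact hq _

end Isometry

variable [AddCommGroup Λ] [LinearOrder Λ] [IsOrderedAddMonoid Λ] {d : X → X → Λ}
  [Group G] [MulAction G X]
  (hiso : ∀ (g : G) (x y : X), d (g • x) (g • y) = d x y)
  (hfree : ∀ g : G, g ≠ 1 → (∀ t : X, g • t ≠ t) ∧ ∀ t : X, (g * g) • t ≠ t)
include hiso

theorem dist_inv_smul (hd : IsLambdaMetric d) (g : G) (x : X) : d x (g⁻¹ • x) = d x (g • x) := by
  rw [← hiso g x (g⁻¹ • x), smul_inv_smul, hd.symm]

theorem axis_inv (hd : IsLambdaMetric d) (g : G) : axis d g⁻¹ = axis d g := by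
  ext q
  simp only [axis, Set.mem_ofPred_eq, dist_inv_smul hiso hd]

theorem mem_axis_of_between (ht : IsLambdaTree d) {g : G} {y : X}
    (h : Between d y (g • y) (g • g • y)) : y ∈ axis d g := by
  intro t
  have := hiso g t y
  have := ht.metric.symm (g • t) t
  rcases ht.between_or_between h (g • t) with h' | h'
  · have := ht.metric.triangle (g • t) t y
    have := ht.metric.symm (g • y) y
    have := ht.metric.symm t y
    unfold Between at h'
    grind
  · have := hiso g t (g • y)
    have := hiso g y (g • y)
    have := ht.metric.triangle t (g • t) (g • y)
    unfold Between at h'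
    grind

theorem isMedian_of_regular (hd : IsLambdaMetric d) {x : X} {g f : G}
    (hreg : ∃ u g₁ f₁ : G,
      g = u * g₁ ∧ d x (g • x) = d x (u • x) + d x (g₁ • x) ∧
      f = u * f₁ ∧ d x (f • x) = d x (u • x) + d x (f₁ • x) ∧
      2 • d x (u • x) = d x (g • x) + d x (f • x) - d x ((g⁻¹ * f) • x)) :
    ∃ u : G, IsMedian d x (g • x) (f • x) (u • x) := by
  obtain ⟨u, g₁, f₁, rfl, hg, rfl, hf, hu⟩ := hreg
  have hug : d (u • x) ((u * g₁) • x) = d x (g₁ • x) := by rw [mul_smul, hiso]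
  have huf : d (u • x) ((u * f₁) • x) = d x (f₁ • x) := by rw [mul_smul, hiso]
  have hgf : d ((u * g₁) • x) ((u * f₁) • x) = d x (((u * g₁)⁻¹ * (u * f₁)) • x) := by
    rw [mul_smul (u * g₁)⁻¹, ← hiso (u * g₁) x, smul_inv_smul]
  refine ⟨u, ?_, ?_, ?_⟩ <;> unfold Between
  · rw [hug, hg]
  · rw [huf, hf]
  · rw [hd.symm, hug, huf, hgf]
    rw [two_nsmul] at hu
    grind

theorem dist_inv_smul_eq_of_isMedian (hd : IsLambdaMetric d) {g : G} {x q : X}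
    (hq : IsMedian d x (g • x) (g⁻¹ • x) q) : d q (g⁻¹ • x) = d q (g • x) := by
  have := dist_inv_smul hiso hd g x
  obtain ⟨h₁, h₂, -⟩ := hq
  unfold Between at h₁ h₂
  grind

theorem smul_between_of_isMedian (hd : IsLambdaMetric d) {g : G} {x q : X}
    (hq : IsMedian d x (g • x) (g⁻¹ • x) q) :
    Between d x (g • q) (g • x) ∧ d x (g • q) = d q (g • x) := by
  have hxq : d x (g • q) = d q (g • x) := by
    rw [← dist_inv_smul_eq_of_isMedian hiso hd hq, hd.symm q, ← hiso g (g⁻¹ • x) q, smul_inv_smul]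
  refine ⟨?_, hxq⟩
  have := hd.symm q x
  have := hiso g q x
  have := hq.1
  unfold Between at *
  grind

include hfree

theorem mem_axis_of_isMedian (ht : IsLambdaTree d) {g : G} (hg : g ≠ 1) {x q : X}
    (hq : IsMedian d x (g • x) (g⁻¹ • x) q) : q ∈ axis d g := by
  have hq' : IsMedian d x (g⁻¹ • x) (g⁻¹⁻¹ • x) q := by
    rw [inv_inv]
    exact ⟨hq.2.1, hq.1, ht.metric.between_symm hq.2.2⟩
  obtain ⟨hgq, hgq_dist⟩ := smul_between_of_isMedian hiso ht.metric hq
  obtain ⟨hg'q, hg'q_dist⟩ := smul_between_of_isMedian hiso ht.metric hq'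
  rw [dist_inv_smul_eq_of_isMedian hiso ht.metric hq] at hg'q_dist
  rcases lt_trichotomy (d x q) (d q (g • x)) with hlt | heq | hgt
  · -- `q, g • q` lie in this order on `[x, g • x]`, so `g • q ∈ [q, g • g • q]`.
    have hxq : Between d x q (g • q) := ht.between_of_dist_le hq.1 hgq (hgq_dist ▸ hlt.le)
    have hqx : Between d q (g • q) (g • x) := ht.metric.between_right_of_between hxq hgq
    have hx : Between d x (g • q) (g • g • x) := by
      simpa only [smul_inv_smul] using ht.metric.between_symm (between_smul hiso g hq.2.2)
    exact mem_axis_of_between hiso ht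
      (ht.metric.between_shrink hx (ht.metric.between_symm hxq) (between_smul hiso g hqx))
  · have h := ht.dist_eq_abs_sub hq.1 hgq
    rw [hgq_dist, heq, sub_self, abs_zero] at h
    exact absurd ((ht.metric.eq_zero_iff _ _).1 h).symm ((hfree g hg).1 q)
  · have h₁ : Between d x (g • q) q := ht.between_of_dist_le hgq hq.1 (hgq_dist ▸ hgt.le)
    have h₂ : Between d x (g⁻¹ • q) q := ht.between_of_dist_le hg'q hq.2.1 (hg'q_dist ▸ hgt.le)
    have h := ht.dist_eq_abs_sub h₁ h₂
    rw [hgq_dist, hg'q_dist, sub_self, abs_zero] at h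
    have hgg : g • g • q = q := by rw [(ht.metric.eq_zero_iff _ _).1 h, smul_inv_smul]
    exact absurd (by rwa [mul_smul]) ((hfree g hg).2 q)

theorem between_of_mem_axis (ht : IsLambdaTree d) {g : G} (hg : g ≠ 1) {s : X}
    (hs : s ∈ axis d g) : Between d (g⁻¹ • s) s (g • s) := by
  obtain ⟨m, hm⟩ := ht.exists_median s (g • s) (g⁻¹ • s)
  obtain ⟨hgm, hgm_dist⟩ := smul_between_of_isMedian hiso ht.metric hm
  -- the median `m` is displaced by `|d s m - d m (g • s)|`, but `s` is displaced minimally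
  have hle : d s m + d m (g • s) ≤ |d s m - d m (g • s)| := by
    rw [show d s m + d m (g • s) = d s (g • s) from hm.1, ← hgm_dist,
      ← ht.dist_eq_abs_sub hm.1 hgm]
    exact hs m
  rcases eq_zero_or_eq_zero_of_add_le_abs_sub (ht.metric.nonneg _ _) (ht.metric.nonneg _ _) hle
    with h | h
  · obtain rfl := (ht.metric.eq_zero_iff s m).1 h
    exact ht.metric.between_symm hm.2.2
  · have h' := dist_inv_smul_eq_of_isMedian hiso ht.metric hm
    rw [h] at h'
    have hgs : g • s = g⁻¹ • s :=
      ((ht.metric.eq_zero_iff _ _).1 h).symm.trans ((ht.metric.eq_zero_iff _ _).1 h')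
    have hgg : (g * g) • s = s := by rw [mul_smul, hgs, smul_inv_smul]
    exact absurd hgg ((hfree g hg).2 s)

theorem between_of_mem_axis_of_between (ht : IsLambdaTree d) {a : G} (ha : a ≠ 1) {p q r : X}
    (hq : q ∈ axis d a) (hr : r ∈ axis d a) (hpq : Between d p q (a • q))
    (hqr : Between d q r (a • r)) : Between d p q r := by
  rcases ht.between_or_between hpq r with h | h
  · exact ht.metric.between_symm h
  -- otherwise both `q` and `a • r` lie on `[r, a • q]`, which is incompatible with `r ∈ [q, a • r]`
  have hL : d r (a • r) = d q (a • q) := le_antisymm (hr q) (hq r)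
  have hrar : Between d r (a • r) (a • q) := by
    have := hiso a r q
    have := ht.metric.symm q r
    unfold Between at *
    grind
  have hle : d q r + d r (a • r) ≤ |d q r - d r (a • r)| := by
    rw [show d q r + d r (a • r) = d q (a • r) from hqr, ht.metric.symm q r,
      ht.dist_eq_abs_sub h hrar]
  rcases eq_zero_or_eq_zero_of_add_le_abs_sub (ht.metric.nonneg _ _) (ht.metric.nonneg _ _) hle
    with h | h
  · obtain rfl := (ht.metric.eq_zero_iff q r).1 h
    exact ht.metric.between_self_right p q
  · rw [hL] at h
    exact absurd ((ht.metric.eq_zero_iff _ _).1 h).symm ((hfree a ha).1 q)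

theorem mem_axis_of_commute (ht : IsLambdaTree d) {a b : G} (ha : a ≠ 1) (hab : Commute a b)
    {y : X} (hy : y ∈ axis d a) : y ∈ axis d b := by
  have hb : ∀ {c : G}, Commute c b → ∀ {z : X}, z ∈ axis d c → b • z ∈ axis d c :=
    fun hc z hz => by
      have := smul_mem_axis_conj hiso b hz
      rwa [← hc.eq, mul_inv_cancel_right] at this
  wlog hdir : Between d y (b • y) (a • b • y) generalizing a
  · refine this (inv_ne_one.2 ha) hab.inv_left (by rwa [axis_inv hiso ht.metric]) ?_
    exact (ht.between_or_between
      (between_of_mem_axis hiso hfree ht ha (hb hab hy)) y).resolve_right hdir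
  have hbb : Between d (b • y) (b • b • y) (a • b • b • y) := by
    have h := between_smul hiso b hdir
    rwa [smul_smul b a, ← hab.eq, mul_smul] at h
  exact mem_axis_of_between hiso ht (between_of_mem_axis_of_between hiso hfree ht ha
    (hb hab hy) (hb hab (hb hab hy)) hdir hbb)

end LambdaTree

/-- if `G` acts freely by isometries on a `ℤⁿ`-tree with base point
`x` and regular based length function `l g = d x (g • x)`, then every abelian
subgroup `A₀` of `G` is conjugate to an abelian subgroup all of whose nontrivial
elements are cyclically reduced, i.e. have their axes through `x`
(`l a = lT a`). -/
theorem abelian_subgroup_conjugate_cyclically_reduced {n : ℕ} {G : Type*} [Group G]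
    [MulAction G X]
    (d : X → X → Lex (Fin n → ℤ))
    (htree : IsLambdaTree d)
    (hiso : ∀ (g : G) (x y : X), d (g • x) (g • y) = d x y)
    (hfree : ∀ g : G, g ≠ 1 → (∀ t : X, g • t ≠ t) ∧ ∀ t : X, (g * g) • t ≠ t)
    (x : X)
    (lT : G → Lex (Fin n → ℤ))
    (hlT : ∀ g : G, (∃ t : X, d t (g • t) = lT g) ∧ ∀ t : X, lT g ≤ d t (g • t))
    (hreg : ∀ g f : G, ∃ u g₁ f₁ : G,
      g = u * g₁ ∧ d x (g • x) = d x (u • x) + d x (g₁ • x) ∧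
      f = u * f₁ ∧ d x (f • x) = d x (u • x) + d x (f₁ • x) ∧
      2 • d x (u • x) = d x (g • x) + d x (f • x) - d x ((g⁻¹ * f) • x))
    (A₀ : Subgroup G) (hab : ∀ a ∈ A₀, ∀ b ∈ A₀, a * b = b * a) :
    ∃ w : G, ∀ a ∈ A₀, a ≠ 1 → d x ((w * a * w⁻¹) • x) = lT (w * a * w⁻¹) := by
  by_cases hA : ∃ a₀ ∈ A₀, a₀ ≠ 1
  swap
  · push Not at hA
    exact ⟨1, fun a ha hne => absurd (hA a ha) hne⟩
  obtain ⟨a₀, ha₀, hne₀⟩ := hA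
  obtain ⟨u, hu⟩ := isMedian_of_regular hiso htree.metric (hreg a₀ a₀⁻¹)
  have hax₀ : u • x ∈ axis d a₀ := mem_axis_of_isMedian hiso hfree htree hne₀ hu
  refine ⟨u⁻¹, fun a ha _ => ?_⟩
  have hax : x ∈ axis d (u⁻¹ * a * u⁻¹⁻¹) := by
    simpa only [inv_smul_smul] using smul_mem_axis_conj hiso u⁻¹
      (mem_axis_of_commute hiso hfree htree hne₀ (hab a₀ ha₀ a ha) hax₀)
  obtain ⟨t, ht⟩ := (hlT _).1
  exact le_antisymm (ht ▸ hax t) ((hlT _).2 x)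
end
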